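/- arXiv:2112.13552 — 3 statements merged into one kernel-verified Lean document; each statement's English description precedes it below -/
import Mathlib

section
/- Minimality of the finite part (Proposition 2.3.2(2)): In the situation of the decomposition result — (R,I) a henselian pair, q : Z ⟶ Spec R separated of finite type with finite closed fiber, and W ⊆ Z the unique clopen subset containing q⁻¹(V(I)) that is finite over Spec R — W is the smallest open subset of Z containing q⁻¹(V(I)): every open subset U of Z with q⁻¹(V(I)) ⊆ U satisfies W ⊆ U. -/
open AlgebraicGeometry CategoryTheory Limits

/-!
A finite morphism is closed, so the part of `W` outside an open `U ⊇ q⁻¹(V(I))` has closed image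
in `Spec R`. A nonempty closed subset of `Spec R` contains a closed point, i.e. a maximal ideal,
and every maximal ideal contains `I ⊆ Jac(R)`. So the image meets `V(I)`, which `U` already covers;
hence `W \ U` is empty.
-/

namespace PrimeSpectrum

variable {R : Type*} [CommRing R] {I : Ideal R}

theorem nonempty_inter_zeroLocus_of_le_jacobson (hI : I ≤ Ideal.jacobson ⊥)
    {T : Set (PrimeSpectrum R)} (hT : IsClosed T) (hne : T.Nonempty) :
    (T ∩ zeroLocus I).Nonempty := by
  obtain ⟨p, hpT, hp⟩ := hT.exists_closed_singleton hne
  have hmax : p.asIdeal.IsMaximal := (isClosed_singleton_iff_isMaximal p).mp hp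
  exact ⟨p, hpT, hI.trans (sInf_le ⟨bot_le, hmax⟩)⟩

theorem eq_univ_of_preimage_zeroLocus_subset {X : Type*} [TopologicalSpace X]
    {f : X → PrimeSpectrum R} (hf : IsClosedMap f) (hI : I ≤ Ideal.jacobson ⊥)
    {U : Set X} (hU : IsOpen U) (hfib : f ⁻¹' zeroLocus I ⊆ U) : U = Set.univ := by
  by_contra hne
  obtain ⟨_, ⟨y, hyU, rfl⟩, hyI⟩ := nonempty_inter_zeroLocus_of_le_jacobson hI
    (hf _ hU.isClosed_compl) ((Set.nonempty_compl.mpr hne).image f)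
  exact hyU (hfib hyI)

end PrimeSpectrum

theorem henselian_finite_part_minimal_general
    (R : Type u) [CommRing R] (I : Ideal R) [HenselianRing R I]
    (Z : Scheme.{u}) (q : Z ⟶ Spec (CommRingCat.of R))
    (W : Set Z) (hWopen : IsOpen W)
    (hWfin : IsFinite (Scheme.Opens.ι (X := Z) ⟨W, hWopen⟩ ≫ q)) :
    ∀ U : Set Z, IsOpen U →
      q.base ⁻¹' (PrimeSpectrum.zeroLocus (I : Set R)) ⊆ U → W ⊆ U := by
  intro U hU hfib
  set Wo : Z.Opens := ⟨W, hWopen⟩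
  have hWU : Wo.ι ⁻¹' U = Set.univ :=
    PrimeSpectrum.eq_univ_of_preimage_zeroLocus_subset (Wo.ι ≫ q).isClosedMap
      HenselianRing.jac (hU.preimage Wo.ι.continuous) (Set.preimage_mono hfib)
  intro x hxW
  obtain ⟨y, rfl⟩ : x ∈ Set.range Wo.ι := by rwa [Scheme.Opens.range_ι]
  exact hWU.ge (Set.mem_univ y)

/-- **Minimality of the finite part.** Let `(R, I)` be a henselian pair and
`q : Z ⟶ Spec R` a separated morphism of finite type whose base change to `Spec (R ⧸ I)` is
finite, and let `W` be the clopen subset of `Z` containing `q⁻¹(V(I))` and finite over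
`Spec R`.  Then `W` is the smallest open subset of `Z` containing `q⁻¹(V(I))`. -/
theorem henselian_finite_part_minimal
    (R : Type u) [CommRing R] (I : Ideal R) [HenselianRing R I]
    (Z : Scheme.{u}) (q : Z ⟶ Spec (CommRingCat.of R))
    [IsSeparated q] [LocallyOfFiniteType q] [QuasiCompact q]
    [IsFinite (pullback.snd q (Spec.map (CommRingCat.ofHom (Ideal.Quotient.mk I))))]
    (W : Set Z) (hWopen : IsOpen W) (hWclosed : IsClosed W)
    (hWfib : q.base ⁻¹' (PrimeSpectrum.zeroLocus (I : Set R)) ⊆ W)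
    (hWfin : IsFinite (Scheme.Opens.ι (X := Z) ⟨W, hWopen⟩ ≫ q)) :
    ∀ U : Set Z, IsOpen U →
      q.base ⁻¹' (PrimeSpectrum.zeroLocus (I : Set R)) ⊆ U → W ⊆ U :=
  henselian_finite_part_minimal_general R I Z q W hWopen hWfin
end

section
/- Factorization through the finite part (Proposition 2.3.2(3)): In the situation of the decomposition result — (R,I) a henselian pair, q : Z ⟶ Spec R separated of finite type with finite closed fiber, W ⊆ Z the unique clopen subset containing q⁻¹(V(I)) that is finite over Spec R — let T be a scheme with structure morphism p : T ⟶ Spec R such that the only open subset of T containing p⁻¹(V(I)) is T itself (i.e. (T, T̄) is a Zariski pair), and let u : T ⟶ Z be a morphism over Spec R. Then the set-theoretic image of u is contained in W; in particular u factors through the open subscheme W of Z. -/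
open AlgebraicGeometry CategoryTheory Limits

theorem Set.range_subset_of_isOpen_of_preimage_superset {X Y : Type*} [TopologicalSpace X]
    [TopologicalSpace Y] {f : X → Y} (hf : Continuous f) {S : Set X}
    (hS : ∀ U : Set X, IsOpen U → S ⊆ U → U = Set.univ) {W : Set Y} (hW : IsOpen W)
    (hSW : S ⊆ f ⁻¹' W) : Set.range f ⊆ W :=
  Set.range_subset_iff.mpr (Set.eq_univ_iff_forall.mp (hS _ (hW.preimage hf) hSW))

theorem henselian_finite_part_factorization_general
    (R : Type u) [CommRing R] (I : Ideal R)
    (Z : Scheme.{u}) (q : Z ⟶ Spec (CommRingCat.of R))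
    (W : Set Z) (hWopen : IsOpen W)
    (hWfib : q.base ⁻¹' (PrimeSpectrum.zeroLocus (I : Set R)) ⊆ W)
    (T : Scheme.{u}) (p : T ⟶ Spec (CommRingCat.of R))
    (hzariski : ∀ U : Set T, IsOpen U →
      p.base ⁻¹' (PrimeSpectrum.zeroLocus (I : Set R)) ⊆ U → U = Set.univ)
    (u : T ⟶ Z) (hu : u ≫ q = p) :
    Set.range u.base ⊆ W := by
  subst hu
  exact Set.range_subset_of_isOpen_of_preimage_superset u.continuous hzariski hWopen
    fun _ hx ↦ hWfib hx

/-- **Factorization through the finite part.** Let `(R, I)` be a henselian pair,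
`q : Z ⟶ Spec R` separated of finite type with finite closed fiber, and `W ⊆ Z` the clopen
subset containing `q⁻¹(V(I))` and finite over `Spec R`.  If `p : T ⟶ Spec R` is such that
`(T, T̄)` is a Zariski pair (the only open of `T` containing `p⁻¹(V(I))` is `T` itself), then
any `R`-morphism `u : T ⟶ Z` has set-theoretic image contained in `W`. -/
theorem henselian_finite_part_factorization
    (R : Type u) [CommRing R] (I : Ideal R) [HenselianRing R I]
    (Z : Scheme.{u}) (q : Z ⟶ Spec (CommRingCat.of R))
    [IsSeparated q] [LocallyOfFiniteType q] [QuasiCompact q]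
    [IsFinite (pullback.snd q (Spec.map (CommRingCat.ofHom (Ideal.Quotient.mk I))))]
    (W : Set Z) (hWopen : IsOpen W) (hWclosed : IsClosed W)
    (hWfib : q.base ⁻¹' (PrimeSpectrum.zeroLocus (I : Set R)) ⊆ W)
    (hWfin : IsFinite (Scheme.Opens.ι (X := Z) ⟨W, hWopen⟩ ≫ q))
    (T : Scheme.{u}) (p : T ⟶ Spec (CommRingCat.of R))
    (hzariski : ∀ U : Set T, IsOpen U →
      p.base ⁻¹' (PrimeSpectrum.zeroLocus (I : Set R)) ⊆ U → U = Set.univ)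
    (u : T ⟶ Z) (hu : u ≫ q = p) :
    Set.range u.base ⊆ W :=
  henselian_finite_part_factorization_general R I Z q W hWopen hWfib T p hzariski u hu
end

section
/- Functoriality of the finite part (Remark 2.3.3(2)): Let (R,I) be a henselian pair. Let q_Z : Z ⟶ Spec R and q_Y : Y ⟶ Spec R be separated morphisms of finite type whose closed fibers (base changes to Spec(R/I)) are finite, and let W_Z ⊆ Z and W_Y ⊆ Y be the corresponding unique clopen subsets containing the closed fibers and finite over Spec R. Then every morphism h : Z ⟶ Y over Spec R maps W_Z into W_Y: the image of W_Z under the underlying map of h is contained in W_Y. -/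
/-!
Let `z ∈ WZ` with `h z ∉ WY`. Since `WZ` is finite over `Spec R`, it is quasi-compact and maps
closed points to closed points of `Spec R`, i.e. to maximal ideals, which contain `I` because `I`
lies in the Jacobson radical of the henselian pair. The set of points of `WZ` that `h` sends
outside the open set `WY` is closed and contains `z`, hence contains a closed point; that point
lies over `V(I)`, so `h` sends it into `WY`, a contradiction.
-/

open AlgebraicGeometry CategoryTheory Limits

universe u

namespace AlgebraicGeometry

lemma Scheme.Hom.exists_mem_preimage_zeroLocus_of_isClosed {R : Type u} [CommRing R]
    {I : Ideal R} (hI : I ≤ Ideal.jacobson ⊥) {X : Scheme.{u}} (f : X ⟶ Spec (CommRingCat.of R))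
    [QuasiCompact f] [UniversallyClosed f] {T : Set X} (hT : IsClosed T) (hne : T.Nonempty) :
    ∃ x ∈ T, f.base x ∈ PrimeSpectrum.zeroLocus (I : Set R) := by
  have : CompactSpace X := QuasiCompact.compactSpace_of_compactSpace f
  obtain ⟨x, hxT, hx⟩ := hT.exists_closed_singleton hne
  have hfx : IsClosed {f.base x} := by
    simpa only [Set.image_singleton] using f.isClosedMap _ hx
  have hmax : (f.base x).asIdeal.IsMaximal :=
    (PrimeSpectrum.isClosed_singleton_iff_isMaximal _).mp hfx
  exact ⟨x, hxT, hI.trans (sInf_le ⟨bot_le, hmax⟩)⟩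

end AlgebraicGeometry

theorem henselian_finite_part_functorial_general
    (R : Type u) [CommRing R] (I : Ideal R) [HenselianRing R I]
    (Z : Scheme.{u}) (qZ : Z ⟶ Spec (CommRingCat.of R))
    (Y : Scheme.{u}) (qY : Y ⟶ Spec (CommRingCat.of R))
    (WZ : Set Z) (hWZopen : IsOpen WZ)
    (hWZfin : IsFinite (Scheme.Opens.ι (X := Z) ⟨WZ, hWZopen⟩ ≫ qZ))
    (WY : Set Y) (hWYopen : IsOpen WY)
    (hWYfib : qY.base ⁻¹' (PrimeSpectrum.zeroLocus (I : Set R)) ⊆ WY)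
    (h : Z ⟶ Y) (hh : h ≫ qY = qZ) :
    h.base '' WZ ⊆ WY := by
  rintro _ ⟨z, hz, rfl⟩
  by_contra hzY
  let U : Z.Opens := ⟨WZ, hWZopen⟩
  let T : Set U := (U.ι ≫ h).base ⁻¹' WYᶜ
  have hT : IsClosed T := hWYopen.isClosed_compl.preimage (U.ι ≫ h).continuous
  obtain ⟨u, huT, hu⟩ := (U.ι ≫ qZ).exists_mem_preimage_zeroLocus_of_isClosed
    (HenselianRing.jac (I := I)) hT ⟨⟨z, hz⟩, hzY⟩
  refine huT (hWYfib ?_)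
  rwa [← hh] at hu

/-- **Functoriality of the finite part.** Let `(R, I)` be a henselian pair, and let
`qZ : Z ⟶ Spec R`, `qY : Y ⟶ Spec R` be separated morphisms of finite type with finite
closed fibers, with finite parts `WZ ⊆ Z` and `WY ⊆ Y` (the unique clopen subsets containing
the closed fibers and finite over `Spec R`).  Then any morphism `h : Z ⟶ Y` over `Spec R`
maps `WZ` into `WY`. -/
theorem henselian_finite_part_functorial
    (R : Type u) [CommRing R] (I : Ideal R) [HenselianRing R I]
    (Z : Scheme.{u}) (qZ : Z ⟶ Spec (CommRingCat.of R))
    [IsSeparated qZ] [LocallyOfFiniteType qZ] [QuasiCompact qZ]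
    [IsFinite (pullback.snd qZ (Spec.map (CommRingCat.ofHom (Ideal.Quotient.mk I))))]
    (Y : Scheme.{u}) (qY : Y ⟶ Spec (CommRingCat.of R))
    [IsSeparated qY] [LocallyOfFiniteType qY] [QuasiCompact qY]
    [IsFinite (pullback.snd qY (Spec.map (CommRingCat.ofHom (Ideal.Quotient.mk I))))]
    (WZ : Set Z) (hWZopen : IsOpen WZ) (hWZclosed : IsClosed WZ)
    (hWZfib : qZ.base ⁻¹' (PrimeSpectrum.zeroLocus (I : Set R)) ⊆ WZ)
    (hWZfin : IsFinite (Scheme.Opens.ι (X := Z) ⟨WZ, hWZopen⟩ ≫ qZ))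
    (WY : Set Y) (hWYopen : IsOpen WY) (hWYclosed : IsClosed WY)
    (hWYfib : qY.base ⁻¹' (PrimeSpectrum.zeroLocus (I : Set R)) ⊆ WY)
    (hWYfin : IsFinite (Scheme.Opens.ι (X := Y) ⟨WY, hWYopen⟩ ≫ qY))
    (h : Z ⟶ Y) (hh : h ≫ qY = qZ) :
    h.base '' WZ ⊆ WY :=
  henselian_finite_part_functorial_general R I Z qZ Y qY WZ hWZopen hWZfin WY hWYopen hWYfib h hh
end
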